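/- (Lemma 3.) Let π̃ be the forced-sampling policy with parameter q > 0, so that T_π̃(t) ≥ N(t) for all t. Then for every x > 0 and every t ≥ 1, P( |θ̂_π̃(t) − θ| > x ) ≤ 2 exp( −x² N(t) / (4σ²) ). -/

import Mathlib

open MeasureTheory ProbabilityTheory

noncomputable section

namespace OneArmedBandit

/-- The model of Woodroofe's one-armed bandit problem with covariates: the covariates
`X_t` are i.i.d. with common law `PX`, the noise variables `ε_t` are i.i.d. centered
Gaussian with variance `σ²`, and all these random variables are mutually independent
under the probability measure `P`. -/
structure Model (Ω : Type) [MeasurableSpace Ω] where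
  P : Measure Ω
  isProb : IsProbabilityMeasure P
  X : ℕ → Ω → ℝ
  eps : ℕ → Ω → ℝ
  σ : ℝ
  σ_pos : 0 < σ
  PX : Measure ℝ
  PX_prob : IsProbabilityMeasure PX
  meas_X : ∀ t, Measurable (X t)
  meas_eps : ∀ t, Measurable (eps t)
  law_X : ∀ t, P.map (X t) = PX
  law_eps : ∀ t, P.map (eps t) = gaussianReal 0 ⟨σ ^ 2, sq_nonneg σ⟩
  indep : iIndepFun (Sum.elim X eps) P

variable {Ω : Type} [MeasurableSpace Ω]

/-- The reward of arm 1 at time `t`: `Y_t = X_t − θ + ε_t` (arm 0 yields reward 0). -/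
def Model.Y (M : Model Ω) (θ : ℝ) (t : ℕ) (ω : Ω) : ℝ := M.X t ω - θ + M.eps t ω

/-- `T_π(t) = ∑_{s=1}^t π_s`, the number of pulls of arm 1 up to time `t`. -/
def Tpulls (π : ℕ → Ω → ℝ) (t : ℕ) (ω : Ω) : ℝ := ∑ s ∈ Finset.Icc 1 t, π s ω

/-- The estimator `θ̂_π(t) = T_π(t)⁻¹ ∑_{s=1}^t (X_s − Y_s) π_s`. -/
def thetaHat (M : Model Ω) (θ : ℝ) (π : ℕ → Ω → ℝ) (t : ℕ) (ω : Ω) : ℝ :=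
  (Tpulls π t ω)⁻¹ * ∑ s ∈ Finset.Icc 1 t, (M.X s ω - M.Y θ s ω) * π s ω

/-- `F⁺_t = σ(X_1,…,X_t,X_{t+1}; π_1,…,π_t; π_1Y_1,…,π_tY_t)`. -/
def Fplus (M : Model Ω) (θ : ℝ) (π : ℕ → Ω → ℝ) (t : ℕ) : MeasurableSpace Ω :=
  (⨆ s ∈ Finset.Icc 1 (t + 1), MeasurableSpace.comap (M.X s) inferInstance) ⊔
  (⨆ s ∈ Finset.Icc 1 t, MeasurableSpace.comap (π s) inferInstance) ⊔
  (⨆ s ∈ Finset.Icc 1 t, MeasurableSpace.comap (fun ω => π s ω * M.Y θ s ω) inferInstance)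

/-- `F_t = σ(X_1,…,X_t; π_1,…,π_t; π_1Y_1,…,π_tY_t)`. -/
def Ffilt (M : Model Ω) (θ : ℝ) (π : ℕ → Ω → ℝ) (t : ℕ) : MeasurableSpace Ω :=
  (⨆ s ∈ Finset.Icc 1 t, MeasurableSpace.comap (M.X s) inferInstance) ⊔
  (⨆ s ∈ Finset.Icc 1 t, MeasurableSpace.comap (π s) inferInstance) ⊔
  (⨆ s ∈ Finset.Icc 1 t, MeasurableSpace.comap (fun ω => π s ω * M.Y θ s ω) inferInstance)

/-- A policy: a `{0,1}`-valued sequence of random variables, `π_t` being measurable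
with respect to `F⁺_{t−1}`. -/
structure IsPolicy (M : Model Ω) (θ : ℝ) (π : ℕ → Ω → ℝ) : Prop where
  vals : ∀ t ω, π t ω = 0 ∨ π t ω = 1
  adapted : ∀ t, 1 ≤ t → Measurable[Fplus M θ π (t - 1)] (π t)

/-- The oracle policy `π*_t = I{X_t ≥ θ}`. -/
def oracle (M : Model Ω) (θ : ℝ) (t : ℕ) (ω : Ω) : ℝ := if θ ≤ M.X t ω then 1 else 0

/-- The inferior sampling rate `S_n(π, π*) = ∑_{t=1}^n P(π_t ≠ π*_t)`. -/
def Srate (M : Model Ω) (θ : ℝ) (π : ℕ → Ω → ℝ) (n : ℕ) : ℝ :=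
  ∑ t ∈ Finset.Icc 1 n, (M.P {ω | π t ω ≠ oracle M θ t ω}).toReal

/-- The regret `R_n(π, π*) = E ∑_{t=1}^n |X_t − θ| I{π_t ≠ π*_t}`. -/
def Regret (M : Model Ω) (θ : ℝ) (π : ℕ → Ω → ℝ) (n : ℕ) : ℝ :=
  ∫ ω, (∑ t ∈ Finset.Icc 1 n,
    |M.X t ω - θ| * (if π t ω ≠ oracle M θ t ω then 1 else 0)) ∂M.P

/-- `(θ, P_X)` belongs to the class `𝒫_α` with constants `C_*, x₀, p`. -/
structure InClass (PX : Measure ℝ) (θ Cstar x0 p α : ℝ) : Prop where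
  margin : ∀ x ∈ Set.Ioc (0 : ℝ) x0, (PX (Set.Icc (θ - x) (θ + x))).toReal ≤ Cstar * x ^ α
  p_le : p ≤ (PX (Set.Ici θ)).toReal
  lt_one : (PX (Set.Ici θ)).toReal < 1

/-- `(θ, P_X)` belongs to the class `𝒫'_α`: additionally `∫ |x − θ| P_X(dx) ≤ μ`. -/
structure InClass' (PX : Measure ℝ) (θ Cstar x0 p α μ : ℝ)
    extends InClass PX θ Cstar x0 p α : Prop where
  moment : ∫ x, |x - θ| ∂PX ≤ μ

end OneArmedBandit
namespace OneArmedBandit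

variable {Ω : Type} [MeasurableSpace Ω]

/-- The forced sampling instants: `τ_1 = 1`, `τ_t = ⌊e^{qt}⌋` for `t ≥ 2`. -/
def tauFS (q : ℝ) (t : ℕ) : ℕ := if t = 1 then 1 else Nat.floor (Real.exp (q * t))

/-- `𝒯`: the set of distinct values of the sequence `(τ_t)_{t ≥ 1}`. -/
def forcedTimes (q : ℝ) : Set ℕ := {m | ∃ t, 1 ≤ t ∧ tauFS q t = m}

/-- `N(t)`: the number of elements of `𝒯` that are `≤ t`. -/
def Ncount (q : ℝ) (t : ℕ) : ℕ := (forcedTimes q ∩ Set.Iic t).ncard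

/-- `π` is the forced-sampling policy with design parameter `q`: it pulls arm 1 at all
instants in `𝒯`, and acts myopically in between. -/
structure IsForced (M : Model Ω) (θ : ℝ) (q : ℝ) (π : ℕ → Ω → ℝ) : Prop where
  forced : ∀ t ω, t ∈ forcedTimes q → π t ω = 1
  myopic : ∀ t ω, 1 ≤ t → t ∉ forcedTimes q →
    π t ω = if thetaHat M θ π (t - 1) ω ≤ M.X t ω then 1 else 0

/-- `ν = 1 + q⁻¹ ln₊(2/(e^q − 1))`. -/
def nuFS (q : ℝ) : ℝ := 1 + q⁻¹ * max (Real.log (2 / (Real.exp q - 1))) 0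

/-- `ν₀ = max{ν, min{t : t ≥ 2q⁻¹ ln(t+1)}}`. -/
def nu0 (q : ℝ) : ℝ :=
  max (nuFS q) ((sInf {t : ℕ | 2 * q⁻¹ * Real.log ((t : ℝ) + 1) ≤ (t : ℝ)} : ℕ) : ℝ)

/-- `ϰ_α = (α/2)^{α/2} (1 − 2^{−α})^{−1} + Γ(α/2)/(2 ln 2)`. -/
def kappaFS (α : ℝ) : ℝ :=
  (α / 2) ^ (α / 2) * (1 - (2 : ℝ) ^ (-α))⁻¹ + Real.Gamma (α / 2) / (2 * Real.log 2)

end OneArmedBandit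

/-!
`θ̂(t) - θ = -Sₜ / Tₜ` with `Sₜ = ∑_{s ≤ t} ε_s π_s` and `Tₜ = ∑_{s ≤ t} π_s`. Since `π_s` is
chosen before `ε_s` is drawn, `exp (l Sₜ - σ² l² Tₜ / 2)` is a mean-one martingale for every `l`.
Markov's inequality for it with `l = ± x / σ²` bounds `P(x Tₜ < |Sₜ|)` by
`2 exp (-x² ν / (2σ²))` whenever `Tₜ ≥ ν`, and the forced pulls give `Tₜ ≥ N(t)`.
-/

open MeasureTheory ProbabilityTheory Finset
open scoped NNReal ENNReal

section ExponentialMartingale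

variable {Ω : Type*} {mΩ : MeasurableSpace Ω} {μ : Measure Ω}

lemma measure_ge_le_exp_neg_of_lintegral_exp_le_one {W : Ω → ℝ} (hW : Measurable W)
    (h : ∫⁻ ω, ENNReal.ofReal (Real.exp (W ω)) ∂μ ≤ 1) (a : ℝ) :
    μ {ω | a ≤ W ω} ≤ ENNReal.ofReal (Real.exp (-a)) := by
  have hmarkov : ENNReal.ofReal (Real.exp a) * μ {ω | a ≤ W ω} ≤ 1 := by
    refine le_trans ?_ ((mul_meas_ge_le_lintegral₀ hW.exp.ennreal_ofReal.aemeasurable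
      (ENNReal.ofReal (Real.exp a))).trans h)
    refine mul_le_mul_right (measure_mono fun ω hω ↦ ?_) _
    exact ENNReal.ofReal_le_ofReal (Real.exp_le_exp.mpr hω)
  rw [Real.exp_neg, ENNReal.ofReal_inv_of_pos (Real.exp_pos a)]
  exact ENNReal.le_inv_iff_mul_le.mpr (by rwa [mul_comm])

variable [IsProbabilityMeasure μ]

lemma lintegral_ofReal_exp_mul_sub_eq_one {ξ : Ω → ℝ} {v : ℝ≥0}
    (hξ : μ.map ξ = gaussianReal 0 v) (l : ℝ) :
    ∫⁻ ω, ENNReal.ofReal (Real.exp (l * ξ ω - v * l ^ 2 / 2)) ∂μ = 1 := by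
  have hint : Integrable (fun ω ↦ Real.exp (l * ξ ω)) μ :=
    mgf_pos_iff.mp (by rw [mgf_gaussianReal hξ]; exact Real.exp_pos _)
  simp_rw [Real.exp_sub]
  rw [← ofReal_integral_eq_lintegral_ofReal (hint.div_const _)
      (ae_of_all _ fun _ ↦ by positivity), integral_div, ← mgf, mgf_gaussianReal hξ]
  simp

lemma setLIntegral_mul_exp_gaussian_eq {ξ : Ω → ℝ} {v : ℝ≥0} (hξ_meas : Measurable ξ)
    (hξ : μ.map ξ = gaussianReal 0 v) {m : MeasurableSpace Ω} (hm : m ≤ mΩ)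
    (hindep : Indep m (MeasurableSpace.comap ξ inferInstance) μ) {G : Ω → ℝ≥0∞}
    (hG : Measurable[m] G) {B : Set Ω} (hB : MeasurableSet[m] B) (l : ℝ) :
    ∫⁻ ω in B, G ω * ENNReal.ofReal (Real.exp (l * ξ ω - v * l ^ 2 / 2)) ∂μ =
      ∫⁻ ω in B, G ω ∂μ := by
  rw [← lintegral_indicator (hm _ hB), ← lintegral_indicator (hm _ hB)]
  simp_rw [Set.indicator_mul_left]
  rw [lintegral_mul_eq_lintegral_mul_lintegral_of_independent_measurableSpace hm
    hξ_meas.comap_le hindep (hG.indicator hB)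
    (show Measurable[MeasurableSpace.comap ξ inferInstance]
        fun ω ↦ ENNReal.ofReal (Real.exp (l * ξ ω - v * l ^ 2 / 2)) from
      ((measurable_id.const_mul l).sub_const _).exp.ennreal_ofReal.comp (comap_measurable _)),
    lintegral_ofReal_exp_mul_sub_eq_one hξ, mul_one]

theorem lintegral_exp_predictable_gaussian_sum_eq_one (ℱ : Filtration ℕ mΩ) {ε π : ℕ → Ω → ℝ}
    {v : ℝ≥0} (hε : ∀ n, Measurable[ℱ n] (ε n)) (hπ : ∀ n, Measurable[ℱ n] (π (n + 1)))
    (hπ01 : ∀ n ω, π n ω = 0 ∨ π n ω = 1)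
    (hindep : ∀ n, Indep (ℱ n) (MeasurableSpace.comap (ε (n + 1)) inferInstance) μ)
    (hlaw : ∀ n, μ.map (ε (n + 1)) = gaussianReal 0 v) (l : ℝ) (t : ℕ) :
    ∫⁻ ω, ENNReal.ofReal (Real.exp (l * ∑ s ∈ Icc 1 t, ε s ω * π s ω
      - v * l ^ 2 / 2 * ∑ s ∈ Icc 1 t, π s ω)) ∂μ = 1 := by
  set c : ℝ := v * l ^ 2 / 2
  set W : ℕ → Ω → ℝ := fun t ω ↦ l * ∑ s ∈ Icc 1 t, ε s ω * π s ω - c * ∑ s ∈ Icc 1 t, π s ω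
  change ∫⁻ ω, ENNReal.ofReal (Real.exp (W t ω)) ∂μ = 1
  induction t with
  | zero => simp [W]
  | succ t ih =>
    have hπ_past : ∀ s ∈ Icc 1 t, Measurable[ℱ t] (π s) := fun s hs ↦ by
      obtain ⟨k, rfl⟩ := Nat.exists_eq_add_of_le' (mem_Icc.mp hs).1
      exact (hπ k).mono (ℱ.mono (show k ≤ t by grind)) le_rfl
    have hW : Measurable[ℱ t] (W t) :=
      (measurable_const.mul (Finset.measurable_sum _ fun s hs ↦
        ((hε s).mono (ℱ.mono (mem_Icc.mp hs).2) le_rfl).mul (hπ_past s hs))).sub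
        (measurable_const.mul (Finset.measurable_sum _ hπ_past))
    have hW_succ : ∀ ω, W (t + 1) ω = W t ω + π (t + 1) ω * (l * ε (t + 1) ω - c) := by
      intro ω
      simp only [W, sum_Icc_succ_top (Nat.le_add_left 1 t)]
      ring
    set B := {ω | π (t + 1) ω = 1}
    have hB : MeasurableSet[ℱ t] B := hπ t (measurableSet_singleton 1)
    have hB' : MeasurableSet B := ℱ.le t _ hB
    -- on `B` the new factor is `exp (l ε_{t+1} - c)`, off `B` it is `1`
    have h_split : ∫⁻ ω, ENNReal.ofReal (Real.exp (W (t + 1) ω)) ∂μ =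
        ∫⁻ ω in B, ENNReal.ofReal (Real.exp (W t ω)) *
            ENNReal.ofReal (Real.exp (l * ε (t + 1) ω - c)) ∂μ +
          ∫⁻ ω in Bᶜ, ENNReal.ofReal (Real.exp (W t ω)) ∂μ := by
      rw [← lintegral_add_compl _ hB']
      congr 1
      · refine setLIntegral_congr_fun hB' fun ω hω ↦ ?_
        simp only [hW_succ, hω.out, one_mul, Real.exp_add]
        exact ENNReal.ofReal_mul (Real.exp_nonneg _)
      · refine setLIntegral_congr_fun hB'.compl fun ω hω ↦ ?_
        simp only [hW_succ, (hπ01 (t + 1) ω).resolve_right hω, zero_mul, add_zero]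
    rw [h_split, setLIntegral_mul_exp_gaussian_eq ((hε (t + 1)).mono (ℱ.le _) le_rfl)
      (hlaw t) (ℱ.le t) (hindep t) hW.exp.ennreal_ofReal hB, lintegral_add_compl _ hB', ih]

end ExponentialMartingale

namespace OneArmedBandit

section

variable {Ω : Type} [MeasurableSpace Ω]

/-- `σ(X_s, s ≤ n + 1; ε_s, s ≤ n)`: everything fixed before `ε_{n+1}` is drawn. Index `0` is
included; it is harmless and saves bookkeeping. -/
def Model.history (M : Model Ω) : Filtration ℕ ‹MeasurableSpace Ω› where
  seq n := ⨆ i ∈ {i : ℕ ⊕ ℕ | Sum.elim (· ≤ n + 1) (· ≤ n) i},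
    MeasurableSpace.comap (Sum.elim M.X M.eps i) inferInstance
  mono' _ _ hnm := biSup_mono fun i hi ↦ by cases i <;> simp_all <;> omega
  le' _ := iSup₂_le fun i _ ↦ by
    cases i
    exacts [(M.meas_X _).comap_le, (M.meas_eps _).comap_le]

lemma Model.measurable_X_history (M : Model Ω) {s n : ℕ} (hs : s ≤ n + 1) :
    Measurable[M.history n] (M.X s) :=
  Measurable.of_comap_le (le_iSup₂_of_le (Sum.inl s) hs le_rfl)

lemma Model.measurable_eps_history (M : Model Ω) {s n : ℕ} (hs : s ≤ n) :
    Measurable[M.history n] (M.eps s) :=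
  Measurable.of_comap_le (le_iSup₂_of_le (Sum.inr s) hs le_rfl)

lemma Model.indep_history_eps (M : Model Ω) (n : ℕ) :
    Indep (M.history n) (MeasurableSpace.comap (M.eps (n + 1)) inferInstance) M.P := by
  have h := indep_iSup_of_disjoint
    (fun i ↦ by cases i; exacts [(M.meas_X _).comap_le, (M.meas_eps _).comap_le])
    M.indep.iIndep (S := {i : ℕ ⊕ ℕ | Sum.elim (· ≤ n + 1) (· ≤ n) i}) (T := {Sum.inr (n + 1)})
    (Set.disjoint_singleton_right.mpr (by simp))
  simp only [Set.mem_singleton_iff, iSup_iSup_eq_left] at h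
  exact h

lemma IsPolicy.fplus_le_history {M : Model Ω} {θ : ℝ} {π : ℕ → Ω → ℝ} (hπ : IsPolicy M θ π)
    (n : ℕ) : Fplus M θ π n ≤ M.history n := by
  induction n using Nat.strong_induction_on with
  | _ n ih =>
    have hπ_meas : ∀ s ∈ Icc 1 n, Measurable[M.history n] (π s) := fun s hs ↦
      (hπ.adapted s (mem_Icc.mp hs).1).mono
        ((ih (s - 1) (by grind)).trans (M.history.mono (by grind))) le_rfl
    refine sup_le (sup_le (iSup₂_le fun s hs ↦ ?_) (iSup₂_le fun s hs ↦ ?_))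
      (iSup₂_le fun s hs ↦ ?_)
    · exact (M.measurable_X_history (mem_Icc.mp hs).2).comap_le
    · exact (hπ_meas s hs).comap_le
    · exact ((hπ_meas s hs).mul (((M.measurable_X_history (by grind)).sub measurable_const).add
        (M.measurable_eps_history (mem_Icc.mp hs).2))).comap_le

lemma IsPolicy.measurable_history {M : Model Ω} {θ : ℝ} {π : ℕ → Ω → ℝ} (hπ : IsPolicy M θ π)
    (n : ℕ) : Measurable[M.history n] (π (n + 1)) :=
  (hπ.adapted (n + 1) (by omega)).mono (hπ.fplus_le_history n) le_rfl

variable {M : Model Ω} {θ : ℝ} {π : ℕ → Ω → ℝ}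

lemma IsPolicy.nonneg (hπ : IsPolicy M θ π) (s : ℕ) (ω : Ω) : 0 ≤ π s ω := by
  rcases hπ.vals s ω with h | h <;> simp [h]

lemma IsPolicy.measurable (hπ : IsPolicy M θ π) {s : ℕ} (hs : 1 ≤ s) : Measurable (π s) := by
  obtain ⟨n, rfl⟩ := Nat.exists_eq_add_of_le' hs
  exact (hπ.measurable_history n).mono (M.history.le n) le_rfl

lemma IsPolicy.lintegral_exp_noise_sum_eq_one (hπ : IsPolicy M θ π) (l : ℝ) (t : ℕ) :
    ∫⁻ ω, ENNReal.ofReal (Real.exp (l * ∑ s ∈ Icc 1 t, M.eps s ω * π s ω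
      - M.σ ^ 2 * l ^ 2 / 2 * Tpulls π t ω)) ∂M.P = 1 := by
  have := M.isProb
  exact lintegral_exp_predictable_gaussian_sum_eq_one M.history (v := ⟨M.σ ^ 2, sq_nonneg M.σ⟩)
    (fun _ ↦ M.measurable_eps_history le_rfl) hπ.measurable_history hπ.vals M.indep_history_eps
    (fun _ ↦ M.law_eps _) l t

theorem IsPolicy.measure_lt_abs_noise_sum_le (hπ : IsPolicy M θ π) {x ν : ℝ} (hx : 0 < x)
    {t : ℕ} (hν : ∀ ω, ν ≤ Tpulls π t ω) :
    M.P {ω | x * Tpulls π t ω < |∑ s ∈ Icc 1 t, M.eps s ω * π s ω|} ≤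
      ENNReal.ofReal (2 * Real.exp (-(x ^ 2 * ν) / (2 * M.σ ^ 2))) := by
  have hσ : 0 < M.σ ^ 2 := pow_pos M.σ_pos 2
  set S : Ω → ℝ := fun ω ↦ ∑ s ∈ Icc 1 t, M.eps s ω * π s ω
  set a := x ^ 2 * ν / (2 * M.σ ^ 2)
  set W : ℝ → Ω → ℝ := fun l ω ↦ l * S ω - M.σ ^ 2 * l ^ 2 / 2 * Tpulls π t ω
  have hW : ∀ l, Measurable (W l) := fun l ↦
    (measurable_const.mul (Finset.measurable_sum _ fun s hs ↦
      (M.meas_eps s).mul (hπ.measurable (mem_Icc.mp hs).1))).sub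
      (measurable_const.mul (Finset.measurable_sum _ fun s hs ↦ hπ.measurable (mem_Icc.mp hs).1))
  have h_side : ∀ l, M.P {ω | a ≤ W l ω} ≤ ENNReal.ofReal (Real.exp (-a)) := fun l ↦
    measure_ge_le_exp_neg_of_lintegral_exp_le_one (hW l)
      (hπ.lintegral_exp_noise_sum_eq_one l t).le a
  -- Chernoff with the optimal slopes `l = ± x / σ²`
  have h_cover : ∀ e : ℝ, e ^ 2 = 1 → ∀ ω, x * Tpulls π t ω < e * S ω →
      a ≤ W (e * x / M.σ ^ 2) ω := by
    intro e he ω hω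
    have h_eq : W (e * x / M.σ ^ 2) ω - a =
        (x * (e * S ω) - x ^ 2 * Tpulls π t ω / 2 - x ^ 2 * ν / 2) / M.σ ^ 2 := by
      simp only [W, a, div_pow, mul_pow, he]
      field_simp
    have h_num : 0 ≤ x * (e * S ω) - x ^ 2 * Tpulls π t ω / 2 - x ^ 2 * ν / 2 := by
      nlinarith [mul_lt_mul_of_pos_left hω hx, hν ω]
    linarith [div_nonneg h_num hσ.le]
  have h_sub : {ω | x * Tpulls π t ω < |S ω|} ⊆
      {ω | a ≤ W (1 * x / M.σ ^ 2) ω} ∪ {ω | a ≤ W (-1 * x / M.σ ^ 2) ω} := by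
    intro ω (hω : x * Tpulls π t ω < |S ω|)
    rcases lt_abs.mp hω with h | h
    · exact Or.inl (h_cover 1 (by norm_num) ω (by linarith))
    · exact Or.inr (h_cover (-1) (by norm_num) ω (by linarith))
  calc M.P {ω | x * Tpulls π t ω < |S ω|}
      ≤ ENNReal.ofReal (Real.exp (-a)) + ENNReal.ofReal (Real.exp (-a)) :=
        (measure_mono h_sub).trans ((measure_union_le _ _).trans (add_le_add (h_side _) (h_side _)))
    _ = ENNReal.ofReal (2 * Real.exp (-(x ^ 2 * ν) / (2 * M.σ ^ 2))) := by
        rw [← ENNReal.ofReal_add (by positivity) (by positivity), ← two_mul, neg_div]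

lemma thetaHat_sub_eq {t : ℕ} {ω : Ω} (hT : Tpulls π t ω ≠ 0) :
    thetaHat M θ π t ω - θ = -(∑ s ∈ Icc 1 t, M.eps s ω * π s ω) / Tpulls π t ω := by
  have h_sum : ∑ s ∈ Icc 1 t, (M.X s ω - M.Y θ s ω) * π s ω =
      θ * Tpulls π t ω - ∑ s ∈ Icc 1 t, M.eps s ω * π s ω := by
    simp only [Tpulls, Model.Y, mul_sum, ← sum_sub_distrib]
    exact sum_congr rfl fun s _ ↦ by ring
  rw [thetaHat, h_sum]
  field_simp
  ring

theorem IsPolicy.measure_lt_abs_thetaHat_sub_le (hπ : IsPolicy M θ π) {x ν : ℝ} (hx : 0 < x)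
    (hν : 0 < ν) {t : ℕ} (hνT : ∀ ω, ν ≤ Tpulls π t ω) :
    M.P {ω | x < |thetaHat M θ π t ω - θ|} ≤
      ENNReal.ofReal (2 * Real.exp (-(x ^ 2 * ν) / (2 * M.σ ^ 2))) := by
  refine le_trans (measure_mono fun ω (hω : x < _) ↦ ?_) (hπ.measure_lt_abs_noise_sum_le hx hνT)
  have hT : 0 < Tpulls π t ω := hν.trans_le (hνT ω)
  rwa [thetaHat_sub_eq hT.ne', abs_div, abs_neg, abs_of_pos hT, lt_div_iff₀ hT] at hω

lemma one_le_of_mem_forcedTimes {q : ℝ} (hq : 0 ≤ q) {m : ℕ} (hm : m ∈ forcedTimes q) :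
    1 ≤ m := by
  obtain ⟨s, -, rfl⟩ := hm
  unfold tauFS
  split_ifs
  · exact le_rfl
  · exact Nat.le_floor (by simpa using Real.one_le_exp (by positivity))

lemma IsForced.ncount_le_tpulls {q : ℝ} (hf : IsForced M θ q π) (hq : 0 ≤ q)
    (hπ : ∀ s ω, 0 ≤ π s ω) (t : ℕ) (ω : Ω) : (Ncount q t : ℝ) ≤ Tpulls π t ω := by
  classical
  set F := (Icc 1 t).filter (· ∈ forcedTimes q)
  have hF : forcedTimes q ∩ Set.Iic t = F := by
    ext m
    simp only [F, coe_filter, mem_Icc, Set.mem_inter_iff, Set.mem_Iic]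
    exact ⟨fun ⟨hm, hmt⟩ ↦ ⟨⟨one_le_of_mem_forcedTimes hq hm, hmt⟩, hm⟩,
      fun ⟨⟨_, hmt⟩, hm⟩ ↦ ⟨hm, hmt⟩⟩
  calc (Ncount q t : ℝ) = ∑ s ∈ F, π s ω := by
        rw [Ncount, hF, Set.ncard_coe_finset, sum_congr rfl fun s hs ↦
          hf.forced s ω (mem_filter.mp hs).2, sum_const, nsmul_one]
    _ ≤ Tpulls π t ω := sum_le_sum_of_subset_of_nonneg (filter_subset _ _) fun s _ _ ↦ hπ s ω

end

theorem lemma3_forced_tail_general (Ω : Type) [MeasurableSpace Ω] (M : Model Ω) (θ q : ℝ)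
    (hq : 0 < q) (π : ℕ → Ω → ℝ) (hπ : IsPolicy M θ π) (hf : IsForced M θ q π)
    (x : ℝ) (hx : 0 < x) (t : ℕ) :
    (M.P {ω | x < |thetaHat M θ π t ω - θ|}).toReal ≤
      2 * Real.exp (-(x ^ 2 * (Ncount q t : ℝ)) / (4 * M.σ ^ 2)) := by
  have := M.isProb
  rcases (Ncount q t).eq_zero_or_pos with hN | hN
  · rw [hN, Nat.cast_zero, mul_zero, neg_zero, zero_div, Real.exp_zero, mul_one]
    exact measureReal_le_one.trans one_le_two
  have h_tail := hπ.measure_lt_abs_thetaHat_sub_le hx (Nat.cast_pos.mpr hN)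
    (hf.ncount_le_tpulls hq.le hπ.nonneg t)
  calc (M.P {ω | x < |thetaHat M θ π t ω - θ|}).toReal
      ≤ 2 * Real.exp (-(x ^ 2 * (Ncount q t : ℝ)) / (2 * M.σ ^ 2)) :=
        ENNReal.toReal_le_of_le_ofReal (by positivity) h_tail
    _ ≤ 2 * Real.exp (-(x ^ 2 * (Ncount q t : ℝ)) / (4 * M.σ ^ 2)) := by
        have := M.σ_pos
        gcongr _ * Real.exp ?_
        rw [neg_div, neg_div, neg_le_neg_iff]
        gcongr
        norm_num

/-- Lemma 3: for the forced-sampling policy `π̃` with parameter `q > 0`, for every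
`x > 0` and every `t ≥ 1`, `P(|θ̂_π̃(t) − θ| > x) ≤ 2 exp(−x² N(t)/(4σ²))`. -/
theorem lemma3_forced_tail (Ω : Type) [MeasurableSpace Ω] (M : Model Ω) (θ q : ℝ)
    (hq : 0 < q) (π : ℕ → Ω → ℝ) (hπ : IsPolicy M θ π) (hf : IsForced M θ q π)
    (x : ℝ) (hx : 0 < x) (t : ℕ) (ht : 1 ≤ t) :
    (M.P {ω | x < |thetaHat M θ π t ω - θ|}).toReal ≤
      2 * Real.exp (-(x ^ 2 * (Ncount q t : ℝ)) / (4 * M.σ ^ 2)) :=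
  lemma3_forced_tail_general Ω M θ q hq π hπ hf x hx t

end OneArmedBandit
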